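/- arXiv:0811.4605 — 2 statements merged into one kernel-verified Lean document; each statement's English description precedes it below -/
import Mathlib

section
/- Let A = [[0, 1/m], [-mω², 0]] with m, ω > 0, F = [f₁, f₂] a row vector, and L = [l₁, l₂]ᵀ a column vector. Then there exist constants R ≥ 0 and θ ∈ ℝ such that F e^{Aτ} L = R sin(ωτ + θ) for all τ, where R² = (l₁² + (l₂/(mω))²)·(f₁² + (mω f₂)²). -/
open Matrix

lemma exp_J (J : Matrix (Fin 2) (Fin 2) ℝ) (hJ : J * J = -1) (t : ℝ) :
    NormedSpace.exp (t • J) = Real.cos t • (1 : Matrix (Fin 2) (Fin 2) ℝ) + Real.sin t • J := by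
  letI : NormedRing (Matrix (Fin 2) (Fin 2) ℝ) := Matrix.linftyOpNormedRing
  letI : NormedAlgebra ℝ (Matrix (Fin 2) (Fin 2) ℝ) := Matrix.linftyOpNormedAlgebra
  have hc : Continuous (Complex.liftAux J hJ) := by
    have : (Complex.liftAux J hJ : ℂ → Matrix (Fin 2) (Fin 2) ℝ) =
        fun z => algebraMap ℝ _ z.re + z.im • J := by
      ext z : 1; exact Complex.liftAux_apply J hJ z
    rw [this]
    fun_prop
  have h1 : (t • J) = Complex.liftAux J hJ (t • Complex.I) := by
    simp [Complex.liftAux_apply]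
  rw [h1]
  have hmap := NormedSpace.map_exp (Complex.liftAux J hJ).toRingHom hc (t • Complex.I)
  rw [show ((Complex.liftAux J hJ) (t • Complex.I)) = (Complex.liftAux J hJ).toRingHom (t • Complex.I) from rfl]
  refine hmap.symm.trans ?_
  have h2 : NormedSpace.exp (t • Complex.I) = Complex.exp (t * Complex.I) := by
    rw [Complex.exp_eq_exp_ℂ, Complex.real_smul]
  rw [h2, Complex.exp_mul_I]
  simp [Complex.liftAux_apply, Algebra.algebraMap_eq_smul_one, Complex.cos_ofReal_re,
    Complex.sin_ofReal_re]

theorem stmt_8 (m ω : ℝ) (hm : 0 < m) (hω : 0 < ω) (f₁ f₂ l₁ l₂ : ℝ) :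
    ∃ (R θ : ℝ), 0 ≤ R ∧
      (∀ τ : ℝ,
        ((!![f₁, f₂] : Matrix (Fin 1) (Fin 2) ℝ) *
            NormedSpace.exp (τ • (!![0, 1 / m; -(m * ω ^ 2), 0] : Matrix (Fin 2) (Fin 2) ℝ)) *
            (!![l₁; l₂] : Matrix (Fin 2) (Fin 1) ℝ)) 0 0 = R * Real.sin (ω * τ + θ)) ∧
      R ^ 2 = (l₁ ^ 2 + (l₂ / (m * ω)) ^ 2) * (f₁ ^ 2 + (m * ω * f₂) ^ 2) := by
  have hm' : m ≠ 0 := ne_of_gt hm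
  have hω' : ω ≠ 0 := ne_of_gt hω
  set J : Matrix (Fin 2) (Fin 2) ℝ := !![0, 1 / (m * ω); -(m * ω), 0] with hJdef
  have hJ : J * J = -1 := by
    ext i j
    fin_cases i <;> fin_cases j <;>
      · simp [hJdef, Matrix.mul_apply, Fin.sum_univ_two]
        try field_simp
        try ring
  set z : ℂ := ⟨f₁ * (l₂ / (m * ω)) - m * ω * f₂ * l₁, f₁ * l₁ + f₂ * l₂⟩ with hz
  refine ⟨‖z‖, Complex.arg z, norm_nonneg _, ?_, ?_⟩
  · intro τ
    have hA : τ • (!![0, 1 / m; -(m * ω ^ 2), 0] : Matrix (Fin 2) (Fin 2) ℝ) = (ω * τ) • J := by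
      ext i j
      fin_cases i <;> fin_cases j <;>
        · simp [hJdef]
          try field_simp
          try ring
    rw [hA, exp_J J hJ]
    have e1 : ‖z‖ * Real.cos (Complex.arg z) = f₁ * (l₂ / (m * ω)) - m * ω * f₂ * l₁ := by
      simpa [hz] using Complex.norm_mul_cos_arg z
    have e2 : ‖z‖ * Real.sin (Complex.arg z) = f₁ * l₁ + f₂ * l₂ := by
      simpa [hz] using Complex.norm_mul_sin_arg z
    rw [Real.sin_add]
    have key : ((!![f₁, f₂] : Matrix (Fin 1) (Fin 2) ℝ) *
        (Real.cos (ω * τ) • (1 : Matrix (Fin 2) (Fin 2) ℝ) + Real.sin (ω * τ) • J) *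
        (!![l₁; l₂] : Matrix (Fin 2) (Fin 1) ℝ)) 0 0
        = (f₁ * (l₂ / (m * ω)) - m * ω * f₂ * l₁) * Real.sin (ω * τ)
          + (f₁ * l₁ + f₂ * l₂) * Real.cos (ω * τ) := by
      simp only [Matrix.mul_apply, Fin.sum_univ_two, Matrix.add_apply, Matrix.smul_apply,
        Matrix.one_apply, hJdef, Matrix.cons_val', Matrix.cons_val_zero, Matrix.cons_val_one,
        Matrix.head_cons, Matrix.head_fin_const, Matrix.empty_val', Matrix.cons_val_fin_one,
        smul_eq_mul, Fin.zero_eta, Fin.mk_one]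
      norm_num
      ring
    rw [key]
    linear_combination -Real.sin (ω * τ) * e1 - Real.cos (ω * τ) * e2
  · rw [Complex.sq_norm, hz, Complex.normSq_mk]
    field_simp
    ring
end

section
/- Let m, ω > 0, and suppose y₁₁, y₁₂ ∈ ℝ satisfy (4cos²φ)y₁₂² + (2mω² − 4 sin 2φ)y₁₂ + 4sin²φ − 1 = 0 and 2m cos²φ · y₁₁² = y₁₂. Define l₁ = 2 cos φ · y₁₁ and l₂ = 2(cos φ · y₁₂ − sin φ). Then l₁² + (l₂/(mω))² = 1/(m²ω²). -/
theorem stmt_9 (m ω φ y₁₁ y₁₂ : ℝ) (hm : 0 < m) (hω : 0 < ω) (hφ : Real.cos φ ≠ 0)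
    (h1 : 4 * Real.cos φ ^ 2 * y₁₂ ^ 2 + (2 * m * ω ^ 2 - 4 * Real.sin (2 * φ)) * y₁₂ +
      4 * Real.sin φ ^ 2 - 1 = 0)
    (h2 : 2 * m * Real.cos φ ^ 2 * y₁₁ ^ 2 = y₁₂) :
    (2 * Real.cos φ * y₁₁) ^ 2 + ((2 * (Real.cos φ * y₁₂ - Real.sin φ)) / (m * ω)) ^ 2 =
      1 / (m ^ 2 * ω ^ 2) := by
  rw [Real.sin_two_mul] at h1
  have hm' : m ≠ 0 := hm.ne'
  have hω' : ω ≠ 0 := hω.ne'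
  have e1 : (2 * Real.cos φ * y₁₁) ^ 2 = 2 * y₁₂ / m := by
    field_simp
    linear_combination h2
  have e2 : (2 * (Real.cos φ * y₁₂ - Real.sin φ)) ^ 2 = 1 - 2 * m * ω ^ 2 * y₁₂ := by
    linear_combination h1
  rw [e1, div_pow, e2]
  field_simp
  ring
end
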